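/- Let λ : Γ × Ω → ℝ be η-exponentially concave, where Γ is a convex subset of a real vector space: for all N, probability vectors w and forecasts γ¹,...,γᴺ ∈ Γ, exp(−η λ(∑_n w_n γⁿ, ω)) ≥ ∑_n w_n exp(−η λ(γⁿ, ω)) for all ω. Let λ_{u,μ}(γ,ω) = ∫_X λ(γ(x), ω(x)) u_ω(x) dμ_ω(x) be the corresponding integral loss, where ∫_X u_ω dμ_ω = 1. Then λ_{u,μ} is η-exponentially concave: for measurable forecasts γⁿ : X → Γ and γ̄(x) = ∑_n w_n γⁿ(x), exp(−η λ_{u,μ}(γ̄, ω)) ≥ ∑_n w_n exp(−η λ_{u,μ}(γⁿ, ω)) for all measurable ω : X → Ω. -/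

import Mathlib

/-!
Write `J = ∫ F u` and `Iₙ = ∫ fₙ u`, where `F` and `fₙ` are the pointwise losses of the
aggregated and of the `n`-th forecast. Multiplying the pointwise exponential concavity by
`exp (η F)` gives `∑ₙ wₙ exp (η (F - fₙ)) ≤ 1` everywhere. Jensen's inequality for `exp` and the
probability density `u` gives `exp (η (J - Iₙ)) ≤ ∫ exp (η (F - fₙ)) u`, so that
`∑ₙ wₙ exp (η (J - Iₙ)) ≤ ∫ u = 1`, which is the claim multiplied by `exp (η J)`.
The pointwise bound also makes each `wₙ exp (η (F - fₙ)) u` integrable, being dominated by `u`.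
-/

open MeasureTheory Real Finset

theorem sum_mul_exp_sub_le_one_of_sum_mul_exp_le {ι : Type*} (s : Finset ι) {w a : ι → ℝ}
    {b η : ℝ} (h : ∑ i ∈ s, w i * exp (-η * a i) ≤ exp (-η * b)) :
    ∑ i ∈ s, w i * exp (η * b - η * a i) ≤ 1 :=
  calc ∑ i ∈ s, w i * exp (η * b - η * a i) = (∑ i ∈ s, w i * exp (-η * a i)) * exp (η * b) := by
        rw [sum_mul]; congr! 1 with i; rw [mul_assoc, ← exp_add]; ring_nf
    _ ≤ exp (-η * b) * exp (η * b) := by gcongr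
    _ = 1 := by rw [← exp_add]; simp

section

variable {X : Type*} [MeasurableSpace X] {ν : Measure X} {u : X → ℝ}

/-- Where `u` vanishes both sides are `0`, and elsewhere `φ = (φ * u) / u`. -/
theorem AEMeasurable.comp₂_mul_of_mul {φ ψ : X → ℝ} {h : ℝ → ℝ → ℝ}
    (hh : Measurable (Function.uncurry h)) (hu : AEMeasurable u ν)
    (hφ : AEMeasurable (fun x => φ x * u x) ν) (hψ : AEMeasurable (fun x => ψ x * u x) ν) :
    AEMeasurable (fun x => h (φ x) (ψ x) * u x) ν := by
  have heq : (fun x => h (φ x) (ψ x) * u x) =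
      fun x => h (φ x * u x / u x) (ψ x * u x / u x) * u x := by
    funext x
    rcases eq_or_ne (u x) 0 with hx | hx <;> simp [hx]
  rw [heq]
  exact (hh.comp_aemeasurable ((hφ.div hu).prodMk (hψ.div hu))).mul hu

theorem exp_integral_mul_le_integral_exp_mul (hu_nonneg : 0 ≤ᵐ[ν] u) (hu_int : ∫ x, u x ∂ν = 1)
    {g : X → ℝ} (hg : Integrable (fun x => g x * u x) ν)
    (hexp : Integrable (fun x => exp (g x) * u x) ν) :
    exp (∫ x, g x * u x ∂ν) ≤ ∫ x, exp (g x) * u x ∂ν := by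
  set c := ∫ x, g x * u x ∂ν
  have hu := integrable_of_integral_eq_one hu_int
  -- the tangent line of `exp` at `c`, integrated against `u`
  have htangent : ∀ x, 0 ≤ u x →
      exp c * (1 - c) * u x + exp c * (g x * u x) ≤ exp (g x) * u x := by
    intro x hx
    have : exp c * (g x - c + 1) ≤ exp (g x) :=
      calc exp c * (g x - c + 1) ≤ exp c * exp (g x - c) := by gcongr; exact add_one_le_exp _
        _ = exp (g x) := by rw [← exp_add]; ring_nf
    nlinarith
  calc exp c = ∫ x, exp c * (1 - c) * u x + exp c * (g x * u x) ∂ν := by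
        rw [integral_add (hu.const_mul _) (hg.const_mul _), integral_const_mul,
          integral_const_mul, hu_int]
        ring
    _ ≤ ∫ x, exp (g x) * u x ∂ν :=
        integral_mono_ae ((hu.const_mul _).add (hg.const_mul _)) hexp
          (hu_nonneg.mono fun x hx => htangent x hx)

theorem mul_exp_integral_mul_le_integral_mul_exp_mul (hu_nonneg : 0 ≤ᵐ[ν] u)
    (hu_int : ∫ x, u x ∂ν = 1) {c : ℝ} (hc : 0 ≤ c) {g : X → ℝ}
    (hg : Integrable (fun x => g x * u x) ν)
    (hexp : Integrable (fun x => c * exp (g x) * u x) ν) :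
    c * exp (∫ x, g x * u x ∂ν) ≤ ∫ x, c * exp (g x) * u x ∂ν := by
  rcases hc.eq_or_lt with rfl | hc
  · simp
  simp only [mul_assoc, integral_const_mul]
  refine mul_le_mul_of_nonneg_left (exp_integral_mul_le_integral_exp_mul hu_nonneg hu_int hg ?_)
    hc.le
  exact (hexp.const_mul c⁻¹).congr (.of_forall fun x => by field_simp)

theorem sum_mul_exp_integral_mul_le {ι : Type*} [Fintype ι] (hu_nonneg : 0 ≤ᵐ[ν] u)
    (hu_int : ∫ x, u x ∂ν = 1) {w : ι → ℝ} (hw : ∀ i, 0 ≤ w i) (η : ℝ) {f : ι → X → ℝ}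
    {F : X → ℝ} (hf : ∀ i, Integrable (fun x => f i x * u x) ν)
    (hF : Integrable (fun x => F x * u x) ν)
    (hconc : ∀ᵐ x ∂ν, ∑ i, w i * exp (-η * f i x) ≤ exp (-η * F x)) :
    ∑ i, w i * exp (-η * ∫ x, f i x * u x ∂ν) ≤ exp (-η * ∫ x, F x * u x ∂ν) := by
  have hu := integrable_of_integral_eq_one hu_int
  set J := ∫ x, F x * u x ∂ν
  set g : ι → X → ℝ := fun i x => η * F x - η * f i x
  have hg : ∀ i, Integrable (fun x => g i x * u x) ν := fun i =>
    ((hF.const_mul η).sub ((hf i).const_mul η)).congr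
      (.of_forall fun x => by simp only [g, Pi.sub_apply]; ring)
  have hg_int : ∀ i, ∫ x, g i x * u x ∂ν = η * J - η * ∫ x, f i x * u x ∂ν := fun i => by
    simp only [g, sub_mul, mul_assoc]
    rw [integral_sub (hF.const_mul η) ((hf i).const_mul η), integral_const_mul,
      integral_const_mul]
  have hterm_nonneg : ∀ᵐ x ∂ν, ∀ i, 0 ≤ w i * exp (g i x) * u x := by
    filter_upwards [hu_nonneg] with x hx i
    exact mul_nonneg (mul_nonneg (hw i) (exp_pos _).le) hx
  have hsum_le : ∀ᵐ x ∂ν, ∑ i, w i * exp (g i x) * u x ≤ u x := by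
    filter_upwards [hconc, hu_nonneg] with x hx hux
    rw [← sum_mul]
    exact mul_le_of_le_one_left hux (sum_mul_exp_sub_le_one_of_sum_mul_exp_le _ hx)
  have hterm_int : ∀ i, Integrable (fun x => w i * exp (g i x) * u x) ν := fun i => by
    refine hu.mono' (AEMeasurable.comp₂_mul_of_mul (h := fun a b => w i * exp (η * a - η * b))
      (by fun_prop) hu.aemeasurable hF.aemeasurable (hf i).aemeasurable).aestronglyMeasurable ?_
    filter_upwards [hterm_nonneg, hsum_le] with x hx hx_sum
    rw [norm_of_nonneg (hx i)]
    exact (single_le_sum (fun j _ => hx j) (mem_univ i)).trans hx_sum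
  calc ∑ i, w i * exp (-η * ∫ x, f i x * u x ∂ν)
      = exp (-η * J) * ∑ i, w i * exp (∫ x, g i x * u x ∂ν) := by
        rw [mul_sum]; congr! 1 with i; simp only [hg_int, mul_left_comm _ (w i), ← exp_add]
        ring_nf
    _ ≤ exp (-η * J) * ∫ x, ∑ i, w i * exp (g i x) * u x ∂ν := by
        rw [integral_finsetSum _ fun i _ => hterm_int i]
        gcongr with i
        exact mul_exp_integral_mul_le_integral_mul_exp_mul hu_nonneg hu_int (hw i) (hg i)
          (hterm_int i)
    _ ≤ exp (-η * J) * ∫ x, u x ∂ν := by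
        refine mul_le_mul_of_nonneg_left ?_ (exp_pos _).le
        exact integral_mono_ae (integrable_finsetSum _ fun i _ => hterm_int i) hu hsum_le
    _ = exp (-η * J) := by rw [hu_int, mul_one]

end

theorem integral_exp_concavity_general
    {V Ω X : Type*} [AddCommGroup V] [Module ℝ V]
    [MeasurableSpace X]
    (Γ : Set V)
    (lam : V → Ω → ℝ)
    (η : ℝ)
    (hconc : ∀ (N : ℕ) (w : Fin N → ℝ), (∀ n, 0 ≤ w n) → (∑ n, w n = 1) →
      ∀ (γ : Fin N → V), (∀ n, γ n ∈ Γ) → ∀ o : Ω,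
        ∑ n, w n * Real.exp (-η * lam (γ n) o) ≤
          Real.exp (-η * lam (∑ n, w n • γ n) o))
    -- ω-dependent σ-finite measure and weight
    (μ : (X → Ω) → Measure X)
    (u : (X → Ω) → X → ℝ)
    (hu_nonneg : ∀ ω x, 0 ≤ u ω x)
    (hu_int : ∀ ω, ∫ x, u ω x ∂(μ ω) = 1)
    -- the game data
    (N : ℕ) (w : Fin N → ℝ) (hw_nonneg : ∀ n, 0 ≤ w n) (hw_sum : ∑ n, w n = 1)
    (γ : Fin N → X → V)
    (hγ_mem : ∀ n x, γ n x ∈ Γ)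
    (ω : X → Ω)
    (hint : ∀ n, Integrable (fun x => lam (γ n x) (ω x) * u ω x) (μ ω))
    (hint_agg : Integrable
      (fun x => lam (∑ n, w n • γ n x) (ω x) * u ω x) (μ ω)) :
    ∑ n, w n * Real.exp (-η * ∫ x, lam (γ n x) (ω x) * u ω x ∂(μ ω)) ≤
      Real.exp (-η * ∫ x, lam (∑ n, w n • γ n x) (ω x) * u ω x ∂(μ ω)) :=
  sum_mul_exp_integral_mul_le (.of_forall (hu_nonneg ω)) (hu_int ω) hw_nonneg η hint hint_agg
    (.of_forall fun x => hconc N w hw_nonneg hw_sum _ (fun n => hγ_mem n x) (ω x))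

/-- Integral exponential concavity: if `lam` is `η`-exponentially concave on a
convex set `Γ`, then the integral loss `λ_{u,μ}` is `η`-exponentially concave,
with the pointwise weighted average as aggregation rule. -/
theorem integral_exp_concavity
    {V Ω X : Type*} [AddCommGroup V] [Module ℝ V]
    [MeasurableSpace V] [MeasurableSpace Ω] [MeasurableSpace X]
    (Γ : Set V) (hΓ : Convex ℝ Γ)
    (lam : V → Ω → ℝ)
    (hlam_meas : Measurable fun p : V × Ω => lam p.1 p.2)
    (η : ℝ) (hη : 0 < η)
    (hconc : ∀ (N : ℕ) (w : Fin N → ℝ), (∀ n, 0 ≤ w n) → (∑ n, w n = 1) →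
      ∀ (γ : Fin N → V), (∀ n, γ n ∈ Γ) → ∀ o : Ω,
        ∑ n, w n * Real.exp (-η * lam (γ n) o) ≤
          Real.exp (-η * lam (∑ n, w n • γ n) o))
    -- ω-dependent σ-finite measure and weight
    (μ : (X → Ω) → Measure X) (hμ : ∀ ω, SigmaFinite (μ ω))
    (u : (X → Ω) → X → ℝ)
    (hu_nonneg : ∀ ω x, 0 ≤ u ω x)
    (hu_meas : ∀ ω, Measurable (u ω))
    (hu_int : ∀ ω, ∫ x, u ω x ∂(μ ω) = 1)
    -- the game data
    (N : ℕ) (w : Fin N → ℝ) (hw_nonneg : ∀ n, 0 ≤ w n) (hw_sum : ∑ n, w n = 1)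
    (γ : Fin N → X → V) (hγ_meas : ∀ n, Measurable (γ n))
    (hγ_mem : ∀ n x, γ n x ∈ Γ)
    (ω : X → Ω) (hω_meas : Measurable ω)
    (hint : ∀ n, Integrable (fun x => lam (γ n x) (ω x) * u ω x) (μ ω))
    (hint_agg : Integrable
      (fun x => lam (∑ n, w n • γ n x) (ω x) * u ω x) (μ ω)) :
    ∑ n, w n * Real.exp (-η * ∫ x, lam (γ n x) (ω x) * u ω x ∂(μ ω)) ≤
      Real.exp (-η * ∫ x, lam (∑ n, w n • γ n x) (ω x) * u ω x ∂(μ ω)) :=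
  integral_exp_concavity_general Γ lam η hconc μ u hu_nonneg hu_int N w hw_nonneg hw_sum γ hγ_mem ω
    hint hint_agg
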